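/- Let c < 0, h² = −c, and let a be a nonzero real number satisfying 2a⁴ − 2a³α − (1/2)h²c − a h²α = 0 (equation (61) with e₂α = hα substituted). Then aα = (2a⁴ + c²/2)/(2a² − c), and since c < 0 this quantity is strictly positive. Consequently, if a₁, …, a_k are nonzero reals each satisfying this relation with the same α, then Σ a_j α > 0, so Σ a_j ≠ 0; in particular Σ a_j = 0 is impossible. -/

import Mathlib

lemma aux6 (c h α : ℝ) (hc : c < 0) (hh : h ^ 2 = -c)
    (a : ℝ) (ha : a ≠ 0)
    (heq : 2 * a ^ 4 - 2 * a ^ 3 * α - (1 / 2) * h ^ 2 * c - a * h ^ 2 * α = 0) :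
    a * α = (2 * a ^ 4 + c ^ 2 / 2) / (2 * a ^ 2 - c) ∧ 0 < a * α := by
  have hden : 0 < 2 * a ^ 2 - c := by nlinarith [sq_nonneg a]
  have hnum : 0 < 2 * a ^ 4 + c ^ 2 / 2 := by positivity
  have key : a * α * (2 * a ^ 2 - c) = 2 * a ^ 4 + c ^ 2 / 2 := by
    rw [hh] at heq; nlinarith [heq]
  have heq' : a * α = (2 * a ^ 4 + c ^ 2 / 2) / (2 * a ^ 2 - c) := by
    rw [eq_div_iff hden.ne']; linarith [key]
  exact ⟨heq', heq' ▸ div_pos hnum hden⟩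

/-- Final algebraic contradiction in the proof of Lemma 5.11: with `c < 0`,
`h² = -c`, any nonzero `a` satisfying equation (61) has
`aα = (2a⁴ + c²/2)/(2a² - c) > 0`; hence a family of such nonzero principal
curvatures cannot sum to zero. -/
theorem stmt6 (c h α : ℝ) (hc : c < 0) (hh : h ^ 2 = -c)
    (a : ℝ) (ha : a ≠ 0)
    (heq : 2 * a ^ 4 - 2 * a ^ 3 * α - (1 / 2) * h ^ 2 * c - a * h ^ 2 * α = 0) :
    a * α = (2 * a ^ 4 + c ^ 2 / 2) / (2 * a ^ 2 - c) ∧ 0 < a * α ∧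
      (∀ (k : ℕ) (as : Fin k → ℝ), 0 < k → (∀ j, as j ≠ 0) →
        (∀ j, 2 * (as j) ^ 4 - 2 * (as j) ^ 3 * α - (1 / 2) * h ^ 2 * c
            - (as j) * h ^ 2 * α = 0) →
        0 < (∑ j, as j) * α ∧ (∑ j, as j) ≠ 0) := by
  obtain ⟨h1, h2⟩ := aux6 c h α hc hh a ha heq
  refine ⟨h1, h2, fun k as hk hne heqs => ?_⟩
  have hpos : 0 < (∑ j, as j) * α := by
    rw [Finset.sum_mul]
    have : ∀ j ∈ Finset.univ, 0 < as j * α := fun j _ =>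
      (aux6 c h α hc hh (as j) (hne j) (heqs j)).2
    apply Finset.sum_pos this
    exact Finset.univ_nonempty_iff.mpr (Fin.pos_iff_nonempty.mp hk)
  refine ⟨hpos, fun hsum => ?_⟩
  rw [hsum, zero_mul] at hpos; exact lt_irrefl 0 hpos
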